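/- arXiv:2007.01914 — 4 statements merged into one kernel-verified Lean document; each statement's English description precedes it below -/
import Mathlib

section
/- Let F be a totally real number field, a ∈ O_F totally negative and not a square in F, and let p be an odd prime number for which there is a prime ideal 𝔭 of O_F containing p, unramified over p (the 𝔭-adic valuation of p is 1), such that the image of a in the residue field O_F/𝔭 is nonzero and not a square (so that the quaternion algebra B = (a, p / F) is a division ring ramified at 𝔭). Then there exists a positive integer d such that −d is not a square in F and no element x of B satisfies x² = −d·1_B; equivalently, there is no F-algebra embedding of the quadratic field F(√−d) into B. -/
/-!
Take `d = p - 1`, so that `-d ≡ 1` modulo `𝔭`. As `F` has a real place, `-d` is not a square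
in `F`, so a solution of `x² = -d` in `B = (a, p / F)` is a pure quaternion `u i + v j + w ij`,
i.e. `a u² + p v² - a p w² = -d`. Multiplying by `a` gives
`(a u)² + a d = -p a (v² - a w²)`. Since `a` and `-a d ≡ a` are units that are not squares
modulo `𝔭`, the norm forms `X² - a Y²` and `X² + a d Y²` only take values of even `𝔭`-adic
valuation, while `p` has valuation one: the two sides have valuations of different parity.
-/

open NumberField Quaternion IsDedekindDomain
open scoped WithZero

theorem WithZero.sq_ne_exp_neg_one_mul_sq {x : ℤᵐ⁰} (hx : x ≠ 0) (y : ℤᵐ⁰) :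
    x ^ 2 ≠ exp (-1) * y ^ 2 := by
  rcases eq_or_ne y 0 with rfl | hy
  · simpa using hx
  intro h
  have := congrArg log h
  rw [log_mul exp_ne_zero (pow_ne_zero 2 hy), log_pow, log_pow, log_exp] at this
  simp only [nsmul_eq_mul] at this
  omega

theorem QuaternionAlgebra.re_sq_eq_or_of_sq_eq_coe {R : Type*} [CommRing R] [NoZeroDivisors R]
    [NeZero (2 : R)] {c₁ c₃ r : R} {x : ℍ[R,c₁,c₃]} (h : x ^ 2 = r) :
    x.re ^ 2 = r ∨ c₁ * x.imI ^ 2 + c₃ * x.imJ ^ 2 - c₁ * c₃ * x.imK ^ 2 = r := by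
  have hre := congrArg re h
  have hI := congrArg imI h
  have hJ := congrArg imJ h
  have hK := congrArg imK h
  simp only [sq, re_mul, imI_mul, imJ_mul, imK_mul, re_coe, imI_coe, imJ_coe, imK_coe,
    zero_mul, add_zero] at hre hI hJ hK
  by_cases hx : x.re = 0
  · right
    rw [hx] at hre
    linear_combination hre
  · left
    have hzero : ∀ t : R, 2 * x.re * t = 0 → t = 0 := fun t ht ↦
      (mul_eq_zero.mp ht).resolve_left (mul_ne_zero two_ne_zero hx)
    have hI0 : x.imI = 0 := hzero _ (by linear_combination hI)
    have hJ0 : x.imJ = 0 := hzero _ (by linear_combination hJ)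
    have hK0 : x.imK = 0 := hzero _ (by linear_combination hK)
    rw [hI0, hJ0, hK0] at hre
    linear_combination hre

theorem not_exists_sq_eq_neg_natCast {F : Type*} [Field F] (σ : F →+* ℝ) {d : ℕ}
    (hd : 0 < d) : ¬ ∃ y : F, y ^ 2 = -(d : F) := by
  rintro ⟨y, hy⟩
  have h := congrArg σ hy
  rw [map_pow, map_neg, map_natCast] at h
  have : (0 : ℝ) < d := by exact_mod_cast hd
  nlinarith [sq_nonneg (σ y)]

namespace IsDedekindDomain.HeightOneSpectrum

variable {R : Type*} [CommRing R] [IsDedekindDomain R] {K : Type*} [Field K] [Algebra R K]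
  [IsFractionRing R K] (v : HeightOneSpectrum R)

theorem intValuation_eq_exp_neg_one {r : R} (hr : r ∈ v.asIdeal) (hr2 : r ∉ v.asIdeal ^ 2) :
    v.intValuation r = WithZero.exp (-1) := by
  have hle : v.intValuation r ≤ WithZero.exp (-((1 : ℕ) : ℤ)) := by
    rwa [intValuation_le_pow_iff_mem, pow_one]
  have hnle : ¬ v.intValuation r ≤ WithZero.exp (-((2 : ℕ) : ℤ)) := by
    rwa [intValuation_le_pow_iff_mem]
  have hr0 : r ≠ 0 := by rintro rfl; exact hr2 (zero_mem _)
  obtain ⟨n, hn⟩ : ∃ n : ℤ, v.intValuation r = WithZero.exp n :=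
    ⟨_, (WithZero.exp_log (v.intValuation_ne_zero r hr0)).symm⟩
  rw [hn, WithZero.exp_le_exp] at hle hnle
  rw [hn, WithZero.exp_inj]
  push_cast at hle hnle
  omega

section NonsquareUnit

variable {c : R} (hc : ¬ ∃ y : R ⧸ v.asIdeal, y ^ 2 = Ideal.Quotient.mk v.asIdeal c)
include hc

theorem valuation_algebraMap_eq_one_of_not_exists_sq :
    v.valuation K (algebraMap R K c) = 1 := by
  rw [valuation_of_algebraMap, intValuation_eq_one_iff, ← Ideal.Quotient.eq_zero_iff_mem]
  exact fun h ↦ hc ⟨0, by rw [h, zero_pow two_ne_zero]⟩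

theorem valuation_sq_sub_eq_one {q : K} (hq : v.valuation K q ≤ 1) :
    v.valuation K (q ^ 2 - algebraMap R K c) = 1 := by
  obtain ⟨t, ht⟩ := v.exists_valuation_sub_lt_of_integer hq 1
  have htc : v.valuation K (algebraMap R K (t ^ 2 - c)) = 1 := by
    rw [valuation_of_algebraMap, intValuation_eq_one_iff]
    exact fun h ↦ hc ⟨Ideal.Quotient.mk _ t, by rw [← map_pow, Ideal.Quotient.eq.mpr h]⟩
  have ht_add : v.valuation K (algebraMap R K t + q) ≤ 1 :=
    Valuation.map_add_le _ (valuation_le_one v t) hq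
  have hdiff : v.valuation K ((algebraMap R K t - q) * (algebraMap R K t + q)) < 1 := by
    rw [Valuation.map_mul]
    exact mul_lt_one_of_lt_of_le ht ht_add
  calc v.valuation K (q ^ 2 - algebraMap R K c)
      = v.valuation K (algebraMap R K (t ^ 2 - c)
          - (algebraMap R K t - q) * (algebraMap R K t + q)) := by
        congr 1; simp only [map_sub, map_pow]; ring
    _ = 1 := by rw [Valuation.map_sub_eq_of_lt_left _ (htc ▸ hdiff), htc]

theorem valuation_sq_sub_mul_sq (x y : K) :
    v.valuation K (x ^ 2 - algebraMap R K c * y ^ 2)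
      = max (v.valuation K x) (v.valuation K y) ^ 2 := by
  rcases lt_or_ge (v.valuation K y) (v.valuation K x) with hlt | hle
  · have hsq : v.valuation K (algebraMap R K c * y ^ 2) < v.valuation K (x ^ 2) := by
      rw [map_mul, valuation_algebraMap_eq_one_of_not_exists_sq v hc, one_mul, map_pow, map_pow]
      exact pow_lt_pow_left₀ hlt zero_le two_ne_zero
    rw [Valuation.map_sub_eq_of_lt_left _ hsq, max_eq_left hlt.le, map_pow]
  · rcases eq_or_ne y 0 with rfl | hy
    · obtain rfl : x = 0 := by simpa using hle
      simp
    have hq : v.valuation K (x / y) ≤ 1 := by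
      rwa [map_div₀, div_le_one₀ (zero_lt_iff.mpr (by simpa using hy))]
    calc v.valuation K (x ^ 2 - algebraMap R K c * y ^ 2)
        = v.valuation K (y ^ 2 * ((x / y) ^ 2 - algebraMap R K c)) := by
          congr 1; field_simp
      _ = max (v.valuation K x) (v.valuation K y) ^ 2 := by
          rw [map_mul, valuation_sq_sub_eq_one v hc hq, mul_one, map_pow, max_eq_right hle]

end NonsquareUnit

variable {v} in
theorem mul_sq_add_mul_sq_sub_mul_sq_ne {a π e : R}
    (ha : ¬ ∃ y : R ⧸ v.asIdeal, y ^ 2 = Ideal.Quotient.mk v.asIdeal a)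
    (hπ : v.intValuation π = WithZero.exp (-1)) (he : Ideal.Quotient.mk v.asIdeal e = 1)
    (x y z : K) :
    algebraMap R K a * x ^ 2 + algebraMap R K π * y ^ 2
      - algebraMap R K a * algebraMap R K π * z ^ 2 ≠ algebraMap R K e := by
  intro h
  have hae : ¬ ∃ y : R ⧸ v.asIdeal, y ^ 2 = Ideal.Quotient.mk v.asIdeal (a * e) := by
    rwa [map_mul, he, mul_one]
  have key : (algebraMap R K a * x) ^ 2 - algebraMap R K (a * e) * 1 ^ 2
      = algebraMap R K π * -algebraMap R K a * (y ^ 2 - algebraMap R K a * z ^ 2) := by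
    rw [map_mul, ← h]; ring
  have hrhs : v.valuation K
      (algebraMap R K π * -algebraMap R K a * (y ^ 2 - algebraMap R K a * z ^ 2))
      = WithZero.exp (-1) * max (v.valuation K y) (v.valuation K z) ^ 2 := by
    rw [Valuation.map_mul, Valuation.map_mul, Valuation.map_neg,
      valuation_algebraMap_eq_one_of_not_exists_sq v ha, mul_one, valuation_of_algebraMap, hπ,
      valuation_sq_sub_mul_sq v ha]
  have hmax : max (v.valuation K (algebraMap R K a * x)) (v.valuation K 1) ≠ 0 :=
    ne_of_gt (lt_of_lt_of_le (by simp) (le_max_right _ _))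
  apply WithZero.sq_ne_exp_neg_one_mul_sq hmax (max (v.valuation K y) (v.valuation K z))
  rw [← valuation_sq_sub_mul_sq v hae, key, hrhs]

end IsDedekindDomain.HeightOneSpectrum

theorem exists_neg_int_not_embedding_into_quaternionAlgebra_general
    (F : Type*) [Field F] [NumberField F]
    (hF : ∀ φ : F →+* ℂ, ComplexEmbedding.IsReal φ)
    (a : 𝓞 F)
    (p : ℕ) (hp : p.Prime)
    (𝔭 : Ideal (𝓞 F)) (h𝔭 : 𝔭.IsPrime)
    (hp𝔭 : (p : 𝓞 F) ∈ 𝔭) (hp𝔭2 : (p : 𝓞 F) ∉ 𝔭 ^ 2)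
    (ha𝔭sq : ¬ ∃ y : 𝓞 F ⧸ 𝔭, y ^ 2 = Ideal.Quotient.mk 𝔭 a) :
    ∃ d : ℕ, 0 < d ∧ (¬ ∃ y : F, y ^ 2 = -(d : F)) ∧
      ¬ ∃ x : ℍ[F, (a : F), (p : F)], x ^ 2 = -(d : ℍ[F, (a : F), (p : F)]) := by
  obtain ⟨φ⟩ : Nonempty (F →+* ℂ) := inferInstance
  have hd : 0 < p - 1 := Nat.sub_pos_of_lt hp.one_lt
  have hns := not_exists_sq_eq_neg_natCast (hF φ).embedding hd
  refine ⟨p - 1, hd, hns, ?_⟩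
  rintro ⟨x, hx⟩
  have h𝔭_ne_bot : 𝔭 ≠ ⊥ := by
    rintro rfl
    rw [Ideal.mem_bot] at hp𝔭
    exact hp𝔭2 (hp𝔭 ▸ zero_mem _)
  let v : HeightOneSpectrum (𝓞 F) := ⟨𝔭, h𝔭, h𝔭_ne_bot⟩
  have he : Ideal.Quotient.mk 𝔭 (-((p - 1 : ℕ) : 𝓞 F)) = 1 := by
    rw [Nat.cast_pred hp.pos, neg_sub, map_sub, map_one, Ideal.Quotient.eq_zero_iff_mem.mpr hp𝔭,
      sub_zero]
  rw [← QuaternionAlgebra.coe_natCast, ← QuaternionAlgebra.coe_neg] at hx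
  rcases QuaternionAlgebra.re_sq_eq_or_of_sq_eq_coe hx with hre | hpure
  · exact hns ⟨x.re, hre⟩
  · exact HeightOneSpectrum.mul_sq_add_mul_sq_sub_mul_sq_ne (K := F) (v := v) ha𝔭sq
      (v.intValuation_eq_exp_neg_one hp𝔭 hp𝔭2) he _ _ _
      (by rwa [map_neg, map_natCast, map_natCast])

/-- Let `F` be a totally real number field, `a ∈ 𝓞 F` totally negative and
not a square in `F`, and let `p` be an odd prime number admitting a prime ideal `𝔭` of
`𝓞 F` containing `p`, unramified over `p` (the `𝔭`-adic valuation of `p` is `1`), such that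
the image of `a` in the residue field `𝓞 F/𝔭` is nonzero and not a square (so that the
quaternion algebra `B = (a, p / F)` is a division ring ramified at `𝔭`). Then there exists a
positive integer `d` such that `−d` is not a square in `F` and no element `x` of `B`
satisfies `x² = −d`; equivalently, `F(√−d)` does not embed into `B` over `F`. -/
theorem exists_neg_int_not_embedding_into_quaternionAlgebra
    (F : Type*) [Field F] [NumberField F]
    (hF : ∀ φ : F →+* ℂ, ComplexEmbedding.IsReal φ)
    (a : 𝓞 F)
    (haneg : ∀ σ : F →+* ℝ, σ (a : F) < 0)
    (hasq : ¬ ∃ y : F, y ^ 2 = (a : F))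
    (p : ℕ) (hp : p.Prime) (hodd : p ≠ 2)
    (𝔭 : Ideal (𝓞 F)) (h𝔭 : 𝔭.IsPrime)
    (hp𝔭 : (p : 𝓞 F) ∈ 𝔭) (hp𝔭2 : (p : 𝓞 F) ∉ 𝔭 ^ 2)
    (ha𝔭 : Ideal.Quotient.mk 𝔭 a ≠ 0)
    (ha𝔭sq : ¬ ∃ y : 𝓞 F ⧸ 𝔭, y ^ 2 = Ideal.Quotient.mk 𝔭 a) :
    ∃ d : ℕ, 0 < d ∧ (¬ ∃ y : F, y ^ 2 = -(d : F)) ∧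
      ¬ ∃ x : ℍ[F, (a : F), (p : F)], x ^ 2 = -(d : ℍ[F, (a : F), (p : F)]) :=
  exists_neg_int_not_embedding_into_quaternionAlgebra_general F hF a p hp 𝔭 h𝔭 hp𝔭 hp𝔭2 ha𝔭sq
end

section
/- Let γ ∈ ℂ be a root of the polynomial S(X) = X⁴ − X³ − X² − X + 1, let K = ℚ(γ) ⊆ ℂ with ring of integers O_K, and let F = ℚ(√13) ⊆ K with ring of integers O_F. Then the ideal 5·O_F is a prime ideal of O_F and is unramified in K: every prime ideal of O_K containing 5·O_F has ramification index 1 over it. -/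
/-!
Both `X² - 13` and `S = X⁴ - X³ - X² - X + 1` stay irreducible modulo 5, as they have no root in
`𝔽_{5^f}` for `f` below their degree. If `P` is a prime of `𝓞 K` over 5, the image of `γ` in the
residue field `𝓞 K ⧸ P ≅ 𝔽_{5^f}` (`f ≤ [K : ℚ] ≤ 4`) is such a root, so `f = [K : ℚ]`, and
comparing norms gives `P = 5𝓞 K`; likewise `5𝓞 F` is the only prime of `𝓞 F` above 5. Thus `5𝓞 F`
is prime and `5𝓞 K = (5𝓞 F)𝓞 K` is itself prime, hence has ramification index 1 over `5𝓞 F`.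
-/

open NumberField Polynomial Ideal Module

section CharFive

variable {R : Type*} [CommRing R] [Nontrivial R]

/- Each final `linear_combination` is a Bézout relation `1 ∈ (q, X ^ 5 ^ f - X)` in `𝔽₅[X]`,
lifted to `ℤ[X]`. -/
theorem pow_five_pow_ne_self_of_quartic_eq_zero {x : R} (h5 : (5 : R) = 0)
    (hx : x ^ 4 - x ^ 3 - x ^ 2 - x + 1 = 0) {f : ℕ} (hf0 : 0 < f) (hf : f < 4) :
    x ^ 5 ^ f ≠ x := by
  have e5 : x ^ 5 = 2 * x ^ 3 + 2 * x ^ 2 + 4 := by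
    linear_combination (x + 1) * hx - h5
  have e25 : x ^ 25 = 1 + x + x ^ 2 + 4 * x ^ 3 := by
    rw [show x ^ 25 = (x ^ 5) ^ 5 by ring, e5]
    linear_combination (269088 + 156512 * x + 88224 * x ^ 2 + 49600 * x ^ 3 + 27808 * x ^ 4
      + 14240 * x ^ 5 + 7264 * x ^ 6 + 3552 * x ^ 7 + 1408 * x ^ 8 + 544 * x ^ 9
      + 192 * x ^ 10 + 32 * x ^ 11) * hx
      + (-53613 + 22515 * x + 67987 * x ^ 2 + 93356 * x ^ 3) * h5
  have e125 : x ^ 125 = 1 + 3 * x + 2 * x ^ 2 + 4 * x ^ 3 := by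
    rw [show x ^ 125 = (x ^ 25) ^ 5 by ring, e25]
    linear_combination (995590 + 577437 * x + 335515 * x ^ 2 + 194623 * x ^ 3 + 112110 * x ^ 4
      + 65062 * x ^ 5 + 36805 * x ^ 6 + 20244 * x ^ 7 + 11296 * x ^ 8 + 5248 * x ^ 9
      + 2304 * x ^ 10 + 1024 * x ^ 11) * hx
      + (-199118 + 83631 * x + 247505 * x ^ 2 + 342793 * x ^ 3) * h5
  intro hfix
  apply one_ne_zero (α := R)
  interval_cases f
  · rw [pow_one, e5] at hfix
    linear_combination (3 + 4 * x + 3 * x ^ 2) * hx + (2 + 4 * x + x ^ 2 + x ^ 3) * hfix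
      - (2 + 3 * x + x ^ 3 + x ^ 4 + x ^ 5 + x ^ 6) * h5
  · rw [show 5 ^ 2 = 25 by norm_num, e25] at hfix
    linear_combination (2 + 3 * x + 3 * x ^ 2) * hx + (4 + 4 * x + 3 * x ^ 2 + 3 * x ^ 3) * hfix
      - (1 + x + x ^ 2 + 3 * x ^ 3 + 3 * x ^ 4 + 3 * x ^ 5 + 3 * x ^ 6) * h5
  · rw [show 5 ^ 3 = 125 by norm_num, e125] at hfix
    linear_combination (3 * x + 4 * x ^ 2) * hx + (1 + 2 * x ^ 2 + 4 * x ^ 3) * hfix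
      - (x + x ^ 2 + x ^ 3 + x ^ 4 + 3 * x ^ 5 + 4 * x ^ 6) * h5

theorem pow_five_pow_ne_self_of_sq_eq_thirteen {y : R} (h5 : (5 : R) = 0) (hy : y ^ 2 = 13)
    {f : ℕ} (hf0 : 0 < f) (hf : f < 2) : y ^ 5 ^ f ≠ y := by
  obtain rfl : f = 1 := by omega
  intro hfix
  apply one_ne_zero (α := R)
  linear_combination (3 + 3 * y ^ 2 + y ^ 4) * hy + 4 * y * hfix
    - (-8 - 8 * y ^ 2 - 2 * y ^ 4 + y ^ 6) * h5

end CharFive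

theorem Ideal.isMaximal_of_forall_isPrime_le_eq {A : Type*} [CommRing A] {I : Ideal A}
    (hI : I ≠ ⊤) (h : ∀ P : Ideal A, P.IsPrime → I ≤ P → P = I) : I.IsMaximal := by
  obtain ⟨M, hM, hIM⟩ := I.exists_le_maximal hI
  rwa [← h M hM.isPrime hIM]

theorem finrank_le_natDegree_of_aeval_eq_zero {F L : Type*} [Field F] [Field L] [Algebra F L]
    {γ : L} (hgen : Algebra.adjoin F {γ} = ⊤) {q : F[X]} (hq : q ≠ 0) (hγ : aeval γ q = 0) :
    finrank F L ≤ q.natDegree := by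
  rw [← IntermediateField.finrank_top', ← IntermediateField.adjoin_eq_top_of_algebra F _ hgen,
    IntermediateField.adjoin.finrank (IsAlgebraic.isIntegral ⟨q, hq, hγ⟩)]
  exact natDegree_le_of_dvd (minpoly.dvd F γ hγ) hq

namespace NumberField

variable {K : Type*} [Field K]

theorem exists_aeval_quotient_eq_zero {γ : K} {q : ℤ[X]} (hq : q.Monic) (hγ : aeval γ q = 0)
    (P : Ideal (𝓞 K)) : ∃ x : 𝓞 K ⧸ P, aeval x q = 0 := by
  let γ' : 𝓞 K := ⟨γ, q, hq, by rwa [← aeval_def]⟩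
  have hγ' : aeval γ' q = 0 := FaithfulSMul.algebraMap_injective (𝓞 K) K <| by
    rw [← aeval_algebraMap_apply, map_zero]
    exact hγ
  exact ⟨Ideal.Quotient.mk P γ', by
    rw [← Quotient.mkₐ_eq_mk ℤ, aeval_algHom_apply, hγ', map_zero]⟩

variable [NumberField K]

theorem absNorm_span_natCast_eq (n : ℕ) :
    absNorm (span {(n : 𝓞 K)}) = n ^ finrank ℚ K := by
  rw [absNorm_span_natCast, RingOfIntegers.rank]

theorem exists_absNorm_eq_pow_of_natCast_mem {p : ℕ} (hp : p.Prime) {P : Ideal (𝓞 K)}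
    (hpP : (p : 𝓞 K) ∈ P) : ∃ f ≤ finrank ℚ K, absNorm P = p ^ f := by
  refine (Nat.dvd_prime_pow hp).mp ?_
  rw [← absNorm_span_natCast_eq]
  exact absNorm_dvd_absNorm_of_le ((span_singleton_le_iff_mem _).mpr hpP)

theorem eq_span_natCast_of_absNorm_eq {p : ℕ} (hp : p ≠ 0) {P : Ideal (𝓞 K)}
    (hpP : (p : 𝓞 K) ∈ P) (hP : absNorm P = p ^ finrank ℚ K) : P = span {(p : 𝓞 K)} := by
  obtain ⟨J, hJ⟩ := dvd_iff_le.mpr ((span_singleton_le_iff_mem _).mpr hpP)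
  have hJ1 : absNorm J = 1 := by
    have hn := congrArg absNorm hJ
    rw [_root_.map_mul, hP, absNorm_span_natCast_eq] at hn
    exact (mul_right_eq_self₀.mp hn.symm).resolve_right (by positivity)
  rw [hJ, absNorm_eq_one_iff.mp hJ1, mul_top]

theorem span_natCast_ne_top {p : ℕ} (hp : 1 < p) : span {(p : 𝓞 K)} ≠ ⊤ := by
  intro h
  have := absNorm_span_natCast_eq (K := K) p
  rw [h, absNorm_top] at this
  exact (Nat.one_lt_pow finrank_pos.ne' hp).ne this

theorem pow_absNorm_eq_self (P : Ideal (𝓞 K)) [P.IsMaximal] (x : 𝓞 K ⧸ P) :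
    x ^ absNorm P = x := by
  let _ := Quotient.field P
  let _ := Fintype.ofFinite (𝓞 K ⧸ P)
  rw [absNorm_apply, Submodule.cardQuot_apply, Nat.card_eq_fintype_card]
  exact FiniteField.pow_card x

/- The residue field of `P` is `𝔽_{p^f}` with `f ≤ [K : ℚ]`; an element lying in no `𝔽_{p^f}` with
`0 < f < [K : ℚ]` forces `f = [K : ℚ]`, so `P` has the norm of `p𝓞 K` and equals it. -/
theorem eq_span_natCast_of_pow_ne_self {p : ℕ} (hp : p.Prime) (P : Ideal (𝓞 K)) [hP : P.IsPrime]
    (hpP : (p : 𝓞 K) ∈ P) (x : 𝓞 K ⧸ P)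
    (hx : ∀ f, 0 < f → f < finrank ℚ K → x ^ p ^ f ≠ x) : P = span {(p : 𝓞 K)} := by
  obtain ⟨f, hfn, hf⟩ := exists_absNorm_eq_pow_of_natCast_mem hp hpP
  have : P.IsMaximal := hP.isMaximal fun h => by
    simp [h, hp.ne_zero] at hpP
  have hf0 : 0 < f := Nat.pos_of_ne_zero fun h =>
    hP.ne_top (absNorm_eq_one_iff.mp (by simp [hf, h]))
  have hfn' : f = finrank ℚ K := by
    by_contra hne
    exact hx f hf0 (lt_of_le_of_ne hfn hne) (hf ▸ pow_absNorm_eq_self P x)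
  exact eq_span_natCast_of_absNorm_eq hp.ne_zero hpP (hfn' ▸ hf)

theorem eq_span_natCast_of_aeval_eq_zero {p : ℕ} (hp : p.Prime) {γ : K}
    (hgen : Algebra.adjoin ℚ {γ} = ⊤) {q : ℤ[X]} (hq : q.Monic) (hγ : aeval γ q = 0)
    (P : Ideal (𝓞 K)) [P.IsPrime] (hpP : (p : 𝓞 K) ∈ P)
    (hroots : ∀ x : 𝓞 K ⧸ P, (p : 𝓞 K ⧸ P) = 0 → aeval x q = 0 →
      ∀ f, 0 < f → f < q.natDegree → x ^ p ^ f ≠ x) :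
    P = span {(p : 𝓞 K)} := by
  have hn : finrank ℚ K ≤ q.natDegree :=
    (finrank_le_natDegree_of_aeval_eq_zero hgen (hq.map (algebraMap ℤ ℚ)).ne_zero
      (by rwa [aeval_map_algebraMap])).trans (hq.natDegree_map _).le
  obtain ⟨x, hx⟩ := exists_aeval_quotient_eq_zero hq hγ P
  have hp0 : (p : 𝓞 K ⧸ P) = 0 := by
    rwa [← map_natCast (Ideal.Quotient.mk P), Quotient.eq_zero_iff_mem]
  exact eq_span_natCast_of_pow_ne_self hp P hpP x fun f hf0 hf =>
    hroots x hp0 hx f hf0 (hf.trans_le hn)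

theorem eq_span_five_of_quartic_eq_zero {γ : K} (hγ : γ ^ 4 - γ ^ 3 - γ ^ 2 - γ + 1 = 0)
    (hgen : Algebra.adjoin ℚ {γ} = ⊤) (P : Ideal (𝓞 K)) [P.IsPrime] (h5 : (5 : 𝓞 K) ∈ P) :
    P = span {5} := by
  have hq : (X ^ 4 - X ^ 3 - X ^ 2 - X + 1 : ℤ[X]).Monic := by monicity!
  have hdeg : (X ^ 4 - X ^ 3 - X ^ 2 - X + 1 : ℤ[X]).natDegree = 4 := by compute_degree!
  simpa using eq_span_natCast_of_aeval_eq_zero Nat.prime_five hgen hq (by simpa using hγ) P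
    (by simpa using h5) fun x hx5 hx f hf0 hf => pow_five_pow_ne_self_of_quartic_eq_zero
      (by simpa using hx5) (by simpa using hx) hf0 (hdeg ▸ hf)

theorem eq_span_five_of_sq_eq_thirteen {s : K} (hs : s ^ 2 = 13)
    (hgen : Algebra.adjoin ℚ {s} = ⊤) (P : Ideal (𝓞 K)) [P.IsPrime] (h5 : (5 : 𝓞 K) ∈ P) :
    P = span {5} := by
  have hq : (X ^ 2 - 13 : ℤ[X]).Monic := by monicity!
  have hdeg : (X ^ 2 - 13 : ℤ[X]).natDegree = 2 := by compute_degree!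
  simpa using eq_span_natCast_of_aeval_eq_zero Nat.prime_five hgen hq
    (by simp [hs, map_ofNat]) P (by simpa using h5) fun y hy5 hy f hf0 hf =>
      pow_five_pow_ne_self_of_sq_eq_thirteen (by simpa using hy5)
        (by simpa [sub_eq_zero, map_ofNat] using hy) hf0 (hdeg ▸ hf)

end NumberField

/-- Let `γ` be a root of `S(X) = X⁴ − X³ − X² − X + 1`, `K = ℚ(γ)` with
ring of integers `𝓞 K`, and `F = ℚ(√13) ⊆ K` with ring of integers `𝓞 F`. Then the ideal
`5 · 𝓞 F` is a prime ideal of `𝓞 F` and is unramified in `K`: every prime ideal of `𝓞 K`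
containing `5 · 𝓞 F` has ramification index `1` over it. -/
theorem five_inert_in_F_and_unramified_in_K
    (F K : Type*) [Field F] [Field K] [NumberField F] [NumberField K] [Algebra F K]
    (γ : K) (hroot : γ ^ 4 - γ ^ 3 - γ ^ 2 - γ + 1 = 0)
    (hgen : Algebra.adjoin ℚ {γ} = ⊤)
    (s : F) (hs : s ^ 2 = 13) (hFgen : Algebra.adjoin ℚ {s} = ⊤) :
    (Ideal.span {(5 : 𝓞 F)}).IsPrime ∧
    ∀ P : Ideal (𝓞 K), P.IsPrime →
      Ideal.map (algebraMap (𝓞 F) (𝓞 K)) (Ideal.span {(5 : 𝓞 F)}) ≤ P →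
      Ideal.ramificationIdx' (Ideal.span {(5 : 𝓞 F)}) P = 1 := by
  have hmap : map (algebraMap (𝓞 F) (𝓞 K)) (span {(5 : 𝓞 F)}) = span {5} := by
    rw [map_span, Set.image_singleton, map_ofNat]
  have hF : (span {(5 : 𝓞 F)}).IsMaximal := by
    have hne : span {(5 : 𝓞 F)} ≠ ⊤ := by
      simpa using span_natCast_ne_top (K := F) (p := 5) (by norm_num)
    refine isMaximal_of_forall_isPrime_le_eq hne fun P hP h5 => ?_
    exact eq_span_five_of_sq_eq_thirteen hs hFgen P ((span_singleton_le_iff_mem _).mp h5)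
  refine ⟨hF.isPrime, fun P hP hle => ?_⟩
  rw [hmap, span_singleton_le_iff_mem] at hle
  obtain rfl := eq_span_five_of_quartic_eq_zero hroot hgen P hle
  rw [← hmap]
  exact ramificationIdx'_map_self_eq_one (hmap ▸ hP.ne_top) (by simp [hmap])
end

section
/- The quaternion algebra B₁ = (5, −2 − 2√13 / ℚ(√13)), i.e., the four-dimensional ℚ(√13)-algebra with basis 1, I, J, IJ subject to I² = 5, J² = −2 − 2√13 and IJ = −JI, is a division ring. -/
/-!
The reduced norm of `x = x₀ + x₁I + x₂J + x₃IJ` is `f(x₀, x₂) - 5 f(x₁, x₃)` with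
`f(u, v) = u² - β v²`, `β = -2 - 2√13`, and `x` is invertible as soon as its norm is nonzero.
Clearing denominators turns a nontrivial zero of the norm form into one with coordinates in
`ℤ[√13]`. There `5` is inert and `β` is not a square in the residue field `𝔽₂₅`, so
`5 ∣ f(u, v)` forces `5 ∣ u` and `5 ∣ v`; hence every coordinate of a zero is divisible by all
powers of `5`, and the zero is trivial.
-/

open Quaternion IntermediateField

/-- The real quadratic field `F = ℚ(√13) ⊆ ℝ`. -/
noncomputable def QSqrt13 : IntermediateField ℚ ℝ := ℚ⟮Real.sqrt 13⟯

/-- `√13` as an element of `ℚ(√13)`. -/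
noncomputable def sqrt13 : QSqrt13 := AdjoinSimple.gen ℚ (Real.sqrt 13)

namespace QuaternionAlgebra

variable {R : Type*} [CommRing R] {c₁ c₂ c₃ : R}

theorem isUnit_of_isUnit_re_mul_star {x : ℍ[R, c₁, c₂, c₃]} (h : IsUnit (x * star x).re) :
    IsUnit x := by
  obtain ⟨u, hu⟩ := h
  have hx : x * star x = (u : R) := by rw [hu]; exact mul_star_eq_coe x
  refine ⟨⟨x, star x * (↑u⁻¹ : R), ?_, ?_⟩, rfl⟩
  · rw [← mul_assoc, hx, ← coe_mul, Units.mul_inv, coe_one]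
  · rw [mul_assoc, coe_commutes, ← mul_assoc, star_comm_self', hx, ← coe_mul, Units.mul_inv,
      coe_one]

theorem re_mul_star (x : ℍ[R, c₁, c₃]) :
    (x * star x).re = x.re ^ 2 - c₃ * x.imJ ^ 2 - c₁ * (x.imI ^ 2 - c₃ * x.imK ^ 2) := by
  simp only [re_mul, re_star, imI_star, imJ_star, imK_star]
  ring

end QuaternionAlgebra

section Descent

variable {R : Type*} [CommRing R] [IsDomain R] {p b : R}

theorem exists_eq_mul_of_sq_sub_mul_sq_eq (hp : p ≠ 0)
    (hb : ∀ x z : R, p ∣ x ^ 2 - b * z ^ 2 → p ∣ x ∧ p ∣ z) {x y z w : R}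
    (h : x ^ 2 - b * z ^ 2 = p * (y ^ 2 - b * w ^ 2)) :
    ∃ x' y' z' w', x = p * x' ∧ y = p * y' ∧ z = p * z' ∧ w = p * w' ∧
      x' ^ 2 - b * z' ^ 2 = p * (y' ^ 2 - b * w' ^ 2) := by
  obtain ⟨⟨x', rfl⟩, ⟨z', rfl⟩⟩ := hb x z ⟨_, h⟩
  have h' : y ^ 2 - b * w ^ 2 = p * (x' ^ 2 - b * z' ^ 2) :=
    mul_left_cancel₀ hp (by linear_combination -h)
  obtain ⟨⟨y', rfl⟩, ⟨w', rfl⟩⟩ := hb y w ⟨_, h'⟩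
  exact ⟨x', y', z', w', rfl, rfl, rfl, rfl, mul_left_cancel₀ hp (by linear_combination -h')⟩

theorem pow_dvd_of_sq_sub_mul_sq_eq (hp : p ≠ 0)
    (hb : ∀ x z : R, p ∣ x ^ 2 - b * z ^ 2 → p ∣ x ∧ p ∣ z) (n : ℕ) {x y z w : R}
    (h : x ^ 2 - b * z ^ 2 = p * (y ^ 2 - b * w ^ 2)) :
    p ^ n ∣ x ∧ p ^ n ∣ y ∧ p ^ n ∣ z ∧ p ^ n ∣ w := by
  induction n generalizing x y z w with
  | zero => simp
  | succ n ih =>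
    obtain ⟨x', y', z', w', rfl, rfl, rfl, rfl, h'⟩ := exists_eq_mul_of_sq_sub_mul_sq_eq hp hb h
    obtain ⟨hx, hy, hz, hw⟩ := ih h'
    rw [pow_succ']
    exact ⟨mul_dvd_mul_left p hx, mul_dvd_mul_left p hy, mul_dvd_mul_left p hz,
      mul_dvd_mul_left p hw⟩

end Descent

theorem thirteen_ne_mul_self (n : ℤ) : 13 ≠ n * n := by
  intro h
  have h5 : ((13 : ℤ) : ZMod 5) = (n : ZMod 5) * n := by rw [h]; push_cast; ring
  generalize (n : ZMod 5) = m at h5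
  revert m h5
  decide

instance : Zsqrtd.Nonsquare 13 := ⟨fun n h => thirteen_ne_mul_self n (by exact_mod_cast h)⟩

-- Mathlib's instance is stated for `ℤ√↑d` with `d : ℕ`, which the literal `13 : ℤ` does not match.
instance : IsDomain (ℤ√13) := inferInstanceAs (IsDomain (ℤ√((13 : ℕ) : ℤ)))

namespace Zsqrtd

theorem eq_zero_of_forall_pow_dvd {d m : ℤ} (hm : m.natAbs ≠ 1) {x : ℤ√d}
    (h : ∀ n : ℕ, (m : ℤ√d) ^ n ∣ x) : x = 0 := by
  have hdvd (n : ℕ) : m ^ n ∣ x.re ∧ m ^ n ∣ x.im := by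
    rw [← intCast_dvd, Int.cast_pow]
    exact h n
  have hinf (k : ℤ) (hk : ∀ n : ℕ, m ^ n ∣ k) : k = 0 := by
    by_contra hk0
    obtain ⟨n, hn⟩ := Int.finiteMultiplicity_iff.mpr ⟨hm, hk0⟩
    exact hn (hk (n + 1))
  exact Zsqrtd.ext (hinf _ fun n => (hdvd n).1) (hinf _ fun n => (hdvd n).2)

theorem five_dvd_of_five_dvd_sq_sub_mul_sq (x z : ℤ√13) (h : 5 ∣ x ^ 2 - ⟨-2, -2⟩ * z ^ 2) :
    5 ∣ x ∧ 5 ∣ z := by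
  -- the `re` and `im` parts of `x ^ 2 - ⟨-2, -2⟩ * z ^ 2`, reduced modulo `5`
  have key : ∀ a b c d : ZMod 5, a ^ 2 + 13 * b ^ 2 + 2 * (c ^ 2 + 13 * d ^ 2 + 26 * c * d) = 0 →
      2 * a * b + 2 * (c ^ 2 + 13 * d ^ 2 + 2 * c * d) = 0 → (a = 0 ∧ b = 0) ∧ c = 0 ∧ d = 0 := by
    decide
  have h5 : (5 : ℤ√13) = ((5 : ℤ) : ℤ√13) := rfl
  simp only [h5, intCast_dvd, sq, re_sub, im_sub, re_mul, im_mul] at h ⊢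
  have hmod (k : ℤ) : 5 ∣ k ↔ (k : ZMod 5) = 0 := (ZMod.intCast_zmod_eq_zero_iff_dvd k 5).symm
  simp only [hmod] at h ⊢
  push_cast at h
  exact key x.re x.im z.re z.im (by linear_combination h.1) (by linear_combination h.2)

theorem eq_zero_of_sq_sub_mul_sq_eq_five_mul {x y z w : ℤ√13}
    (h : x ^ 2 - ⟨-2, -2⟩ * z ^ 2 = 5 * (y ^ 2 - ⟨-2, -2⟩ * w ^ 2)) :
    x = 0 ∧ y = 0 ∧ z = 0 ∧ w = 0 := by
  have hdvd (n : ℕ) := pow_dvd_of_sq_sub_mul_sq_eq (by norm_num)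
    five_dvd_of_five_dvd_sq_sub_mul_sq n h
  have hzero {v : ℤ√13} (hv : ∀ n : ℕ, (5 : ℤ√13) ^ n ∣ v) : v = 0 :=
    eq_zero_of_forall_pow_dvd (m := 5) (by norm_num) hv
  exact ⟨hzero fun n => (hdvd n).1, hzero fun n => (hdvd n).2.1, hzero fun n => (hdvd n).2.2.1,
    hzero fun n => (hdvd n).2.2.2⟩

end Zsqrtd

theorem Subring.exists_common_intCast_mul_mem {A ι : Type*} [CommRing A] [Fintype ι]
    (O : Subring A) (y : ι → A) (h : ∀ i, ∃ n : ℤ, n ≠ 0 ∧ (n : A) * y i ∈ O) :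
    ∃ n : ℤ, n ≠ 0 ∧ ∀ i, (n : A) * y i ∈ O := by
  classical
  choose n hn hmem using h
  refine ⟨∏ i, n i, Finset.prod_ne_zero_iff.mpr fun i _ => hn i, fun i => ?_⟩
  rw [← Finset.prod_erase_mul _ n (Finset.mem_univ i), Int.cast_mul, mul_assoc]
  exact O.mul_mem (intCast_mem O _) (hmem i)

noncomputable def zsqrt13ToReal : ℤ√13 →+* ℝ :=
  Zsqrtd.lift ⟨√13, by norm_num⟩

theorem zsqrt13ToReal_apply (u : ℤ√13) : zsqrt13ToReal u = u.re + u.im * √13 := rfl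

theorem zsqrt13ToReal_injective : Function.Injective zsqrt13ToReal :=
  Zsqrtd.lift_injective _ thirteen_ne_mul_self

theorem coe_sqrt13 : (sqrt13 : ℝ) = √13 := AdjoinSimple.coe_gen ℚ _

theorem QSqrt13.exists_intCast_mul_mem_range (y : QSqrt13) :
    ∃ n : ℤ, n ≠ 0 ∧ (n : ℝ) * y ∈ zsqrt13ToReal.range := by
  have halg : IsAlgebraic ℚ √13 := by
    refine IsIntegral.isAlgebraic (IsIntegral.of_pow two_pos ?_)
    rw [Real.sq_sqrt (by norm_num)]
    exact_mod_cast isIntegral_algebraMap (x := (13 : ℚ))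
  suffices ∀ z ∈ Algebra.adjoin ℚ {√13}, ∃ n : ℤ, n ≠ 0 ∧ (n : ℝ) * z ∈ zsqrt13ToReal.range by
    apply this
    rw [← adjoin_simple_toSubalgebra_of_isAlgebraic halg]
    exact y.2
  intro z hz
  induction hz using Algebra.adjoin_induction with
  | mem x hx =>
    rw [Set.mem_singleton_iff.mp hx]
    exact ⟨1, one_ne_zero, ⟨0, 1⟩, by simp [zsqrt13ToReal_apply]⟩
  | algebraMap r =>
    refine ⟨r.den, by exact_mod_cast r.den_ne_zero, r.num, ?_⟩
    rw [map_intCast, eq_ratCast]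
    exact_mod_cast (Rat.den_mul_eq_num r).symm
  | add x y _ _ hx hy =>
    obtain ⟨m, hm, u, hu⟩ := hx
    obtain ⟨n, hn, v, hv⟩ := hy
    refine ⟨m * n, mul_ne_zero hm hn, n * u + m * v, ?_⟩
    simp only [map_add, map_mul, map_intCast, hu, hv]
    push_cast
    ring
  | mul x y _ _ hx hy =>
    obtain ⟨m, hm, u, hu⟩ := hx
    obtain ⟨n, hn, v, hv⟩ := hy
    refine ⟨m * n, mul_ne_zero hm hn, u * v, ?_⟩
    simp only [map_mul, hu, hv]
    push_cast
    ring

theorem QSqrt13.eq_zero_of_sq_sub_mul_sq_eq_five_mul {y₁ y₂ y₃ y₄ : QSqrt13}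
    (h : y₁ ^ 2 - (-2 - 2 * sqrt13) * y₃ ^ 2 = 5 * (y₂ ^ 2 - (-2 - 2 * sqrt13) * y₄ ^ 2)) :
    y₁ = 0 ∧ y₂ = 0 ∧ y₃ = 0 ∧ y₄ = 0 := by
  obtain ⟨N, hN, hmem⟩ := zsqrt13ToReal.range.exists_common_intCast_mul_mem
    (fun i => (![y₁, y₂, y₃, y₄] i : ℝ)) fun i => QSqrt13.exists_intCast_mul_mem_range _
  obtain ⟨u₁, hu₁⟩ : (N : ℝ) * y₁ ∈ zsqrt13ToReal.range := hmem 0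
  obtain ⟨u₂, hu₂⟩ : (N : ℝ) * y₂ ∈ zsqrt13ToReal.range := hmem 1
  obtain ⟨u₃, hu₃⟩ : (N : ℝ) * y₃ ∈ zsqrt13ToReal.range := hmem 2
  obtain ⟨u₄, hu₄⟩ : (N : ℝ) * y₄ ∈ zsqrt13ToReal.range := hmem 3
  have hR : (y₁ : ℝ) ^ 2 - (-2 - 2 * √13) * y₃ ^ 2 =
      5 * ((y₂ : ℝ) ^ 2 - (-2 - 2 * √13) * y₄ ^ 2) := by
    simpa only [map_sub, map_mul, map_pow, map_neg, map_ofNat, coe_val, coe_sqrt13]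
      using congrArg QSqrt13.val h
  have hβ : zsqrt13ToReal ⟨-2, -2⟩ = -2 - 2 * √13 := by
    simp only [zsqrt13ToReal_apply]
    push_cast
    ring
  have hZ : u₁ ^ 2 - ⟨-2, -2⟩ * u₃ ^ 2 = 5 * (u₂ ^ 2 - ⟨-2, -2⟩ * u₄ ^ 2) := by
    apply zsqrt13ToReal_injective
    simp only [map_sub, map_mul, map_pow, map_ofNat, hβ, hu₁, hu₂, hu₃, hu₄]
    linear_combination (N : ℝ) ^ 2 * hR
  have hzero {y : QSqrt13} {u : ℤ√13} (hu : zsqrt13ToReal u = N * y) (hu₀ : u = 0) : y = 0 := by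
    rw [hu₀, map_zero, eq_comm, mul_eq_zero] at hu
    exact_mod_cast hu.resolve_left (by exact_mod_cast hN)
  obtain ⟨h₁, h₂, h₃, h₄⟩ := Zsqrtd.eq_zero_of_sq_sub_mul_sq_eq_five_mul hZ
  exact ⟨hzero hu₁ h₁, hzero hu₂ h₂, hzero hu₃ h₃, hzero hu₄ h₄⟩

/-- The quaternion algebra `B₁ = (5, −2 − 2√13 / ℚ(√13))`, i.e. the
four-dimensional `ℚ(√13)`-algebra with basis `1, I, J, IJ` subject to `I² = 5`,
`J² = −2 − 2√13` and `IJ = −JI`, is a division ring: every nonzero element is a unit. -/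
theorem quaternionAlgebra_five_neg2sub2sqrt13_isDivisionRing :
    ∀ x : ℍ[QSqrt13, (5 : QSqrt13), -2 - 2 * sqrt13], x ≠ 0 → IsUnit x := by
  intro x hx
  refine QuaternionAlgebra.isUnit_of_isUnit_re_mul_star
    (isUnit_iff_ne_zero.mpr fun hnorm => hx ?_)
  rw [QuaternionAlgebra.re_mul_star, sub_eq_zero] at hnorm
  obtain ⟨hre, himI, himJ, himK⟩ := QSqrt13.eq_zero_of_sq_sub_mul_sq_eq_five_mul hnorm
  ext <;> simp [hre, himI, himJ, himK]
end

section
/- Let n ≥ 1 and let A be an n × n integer matrix with determinant ±1 such that no complex eigenvalue of A is a root of unity, and let T : ℝⁿ/ℤⁿ → ℝⁿ/ℤⁿ be the induced automorphism of the torus, which preserves the Haar probability measure μ. Let c ∈ ℂ with |c| = 1 and c ≠ 1. If g ∈ L²(ℝⁿ/ℤⁿ, μ; ℂ) satisfies g(Tx) = c·g(x) for μ-almost every x, then g = 0 μ-almost everywhere. -/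
open MeasureTheory UnitAddTorus Matrix Function Filter

/-!
Expand `g` in the Fourier basis `e_k(x) = exp(2πi ⟨k, x⟩)`, `k ∈ ℤⁿ`, of `L²(ℝⁿ/ℤⁿ)`.
Since `e_k ∘ T = e_{kA}` and `T` preserves Haar measure, the eigenfunction equation gives
`ĝ(k) = c ĝ(kA)`. At `k = 0` this forces `ĝ(0) = 0` because `c ≠ 1`. For `k ≠ 0` all the
coefficients `ĝ(kAᵐ)` have the same norm as `ĝ(k)` because `|c| = 1`, and the frequencies `kAᵐ`
are pairwise distinct: `kAᵃ = kAᵇ` with `a < b` would make `1` an eigenvalue of `A^(b-a)`, hence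
an eigenvalue of `A` a root of unity. Parseval's `∑ |ĝ(k)|² < ∞` then forces `ĝ(k) = 0`.
-/

lemma Summable.eq_zero_of_injective_of_forall_eq {β E : Type*} [AddCommGroup E]
    [TopologicalSpace E] [IsTopologicalAddGroup E] [T2Space E] {a : β → E} (ha : Summable a)
    {u : ℕ → β} (hu : Injective u) {x : E} (h : ∀ m, a (u m) = x) : x = 0 := by
  have hlim : Tendsto (a ∘ u) atTop (nhds 0) := by
    rw [← Nat.cofinite_eq_atTop]
    exact ha.tendsto_cofinite_zero.comp hu.tendsto_cofinite
  rw [show a ∘ u = fun _ => x from funext h] at hlim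
  exact tendsto_nhds_unique tendsto_const_nhds hlim

lemma AddCircle.toCircle_sum {T : ℝ} {ι : Type*} (s : Finset ι) (x : ι → AddCircle T) :
    toCircle (∑ i ∈ s, x i) = ∏ i ∈ s, toCircle (x i) := by
  induction s using Finset.cons_induction with
  | empty => simp
  | cons i s hi ih => rw [Finset.sum_cons, Finset.prod_cons, toCircle_add, ih]

namespace Matrix

variable {ι : Type*} [Fintype ι] [DecidableEq ι]

lemma mem_spectrum_of_vecMul_eq_smul {K : Type*} [Field K] {M : Matrix ι ι K} {v : ι → K}
    (hv : v ≠ 0) {r : K} (h : v ᵥ* M = r • v) : r ∈ spectrum K M := by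
  rw [spectrum.mem_iff, isUnit_iff_isUnit_det, isUnit_iff_ne_zero, not_not,
    ← exists_vecMul_eq_zero_iff]
  refine ⟨v, hv, ?_⟩
  rw [vecMul_sub, h, Algebra.algebraMap_eq_smul_one, vecMul_smul, vecMul_one, sub_self]

lemma vecMul_pow_ne_self {A : Matrix ι ι ℤ}
    (hev : ∀ z : ℂ, (A.map (Int.cast : ℤ → ℂ)).charpoly.IsRoot z → ∀ k : ℕ, k ≠ 0 → z ^ k ≠ 1)
    {v : ι → ℤ} (hv : v ≠ 0) {d : ℕ} (hd : d ≠ 0) : v ᵥ* A ^ d ≠ v := by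
  intro h
  set w : ι → ℂ := Int.castRingHom ℂ ∘ v
  have hw : w ≠ 0 := fun h0 => hv (funext fun i => by simpa [w] using congrFun h0 i)
  have hfix : w ᵥ* A.map (Int.castRingHom ℂ) ^ d = (1 : ℂ) • w := by
    ext i
    rw [← Matrix.map_pow, ← RingHom.map_vecMul, h, one_smul]
    rfl
  obtain ⟨z, hz, hzd⟩ : 1 ∈ (· ^ d) '' spectrum ℂ (A.map (Int.castRingHom ℂ)) := by
    rw [← spectrum.map_pow_of_pos _ (Nat.pos_of_ne_zero hd)]
    exact mem_spectrum_of_vecMul_eq_smul hw hfix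
  exact hev z (mem_spectrum_iff_isRoot_charpoly.mp hz) d hd hzd

lemma injective_vecMul_pow {A : Matrix ι ι ℤ} (hA : IsUnit A.det)
    (hev : ∀ z : ℂ, (A.map (Int.cast : ℤ → ℂ)).charpoly.IsRoot z → ∀ k : ℕ, k ≠ 0 → z ^ k ≠ 1)
    {v : ι → ℤ} (hv : v ≠ 0) : Injective fun m : ℕ => v ᵥ* A ^ m := by
  refine Injective.of_lt_imp_ne fun a b hab heq => ?_
  refine vecMul_pow_ne_self hev hv (Nat.sub_ne_zero_of_lt hab) ?_
  refine vecMul_injective_of_isUnit (((isUnit_iff_isUnit_det A).mpr hA).pow a) ?_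
  simp only [vecMul_vecMul, ← pow_add, Nat.sub_add_cancel hab.le, heq]

lemma norm_apply_vecMul_pow_of_eq_smul {R 𝕜 E : Type*} [Semiring R] [NormedField 𝕜]
    [SeminormedAddCommGroup E] [NormedSpace 𝕜 E] {A : Matrix ι ι R} {a : (ι → R) → E} {c : 𝕜}
    (hc : ‖c‖ = 1) (h : ∀ k, a k = c • a (k ᵥ* A)) (k : ι → R) (m : ℕ) :
    ‖a (k ᵥ* A ^ m)‖ = ‖a k‖ := by
  induction m with
  | zero => rw [pow_zero, vecMul_one]
  | succ m ih => rw [← ih, h (k ᵥ* A ^ m), norm_smul, hc, one_mul, vecMul_vecMul, pow_succ]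

end Matrix

namespace UnitAddTorus

variable {ι : Type*} [Fintype ι]

/-- The measure underlying `mFourierCoeff` and `mFourierBasis`. The global `volume` on
`AddCircle 1` is `ENNReal.ofReal 1 • haarAddCircle`, which agrees with it only propositionally. -/
noncomputable abbrev haar (ι : Type*) [Fintype ι] : Measure (UnitAddTorus ι) :=
  Measure.pi fun _ => AddCircle.haarAddCircle

lemma volume_eq_haar : (volume : Measure (UnitAddTorus ι)) = haar ι := by
  simp only [volume_pi, AddCircle.volume_eq_smul_haarAddCircle, ENNReal.ofReal_one, one_smul]

noncomputable def matrixHom (A : Matrix ι ι ℤ) : UnitAddTorus ι →+ UnitAddTorus ι where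
  toFun x i := ∑ j, A i j • x j
  map_zero' := by ext; simp
  map_add' x y := by ext; simp [smul_add, Finset.sum_add_distrib]

@[simp]
lemma matrixHom_apply (A : Matrix ι ι ℤ) (x : UnitAddTorus ι) (i : ι) :
    matrixHom A x i = ∑ j, A i j • x j := rfl

lemma continuous_matrixHom (A : Matrix ι ι ℤ) : Continuous (matrixHom A) := by
  refine continuous_pi fun i => ?_
  simp only [matrixHom_apply]
  fun_prop

lemma matrixHom_mul (A B : Matrix ι ι ℤ) :
    matrixHom (A * B) = (matrixHom A).comp (matrixHom B) := by
  ext x i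
  simp only [matrixHom_apply, AddMonoidHom.comp_apply, Matrix.mul_apply, Finset.smul_sum,
    Finset.sum_smul, mul_smul]
  exact Finset.sum_comm

lemma matrixHom_one [DecidableEq ι] : matrixHom (1 : Matrix ι ι ℤ) = AddMonoidHom.id _ := by
  ext x i
  simp [Matrix.one_apply]

lemma surjective_matrixHom [DecidableEq ι] {A : Matrix ι ι ℤ} (hA : IsUnit A.det) :
    Surjective (matrixHom A) := fun y =>
  ⟨matrixHom A⁻¹ y, by
    rw [← AddMonoidHom.comp_apply, ← matrixHom_mul, mul_nonsing_inv _ hA, matrixHom_one]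
    rfl⟩

lemma measurePreserving_matrixHom [DecidableEq ι] {A : Matrix ι ι ℤ} (hA : IsUnit A.det)
    (μ : Measure (UnitAddTorus ι)) [μ.IsAddHaarMeasure] : MeasurePreserving (matrixHom A) μ μ :=
  AddMonoidHom.measurePreserving (continuous_matrixHom A) (surjective_matrixHom hA) rfl

lemma mFourier_apply_eq_toCircle (k : ι → ℤ) (x : UnitAddTorus ι) :
    mFourier k x = AddCircle.toCircle (∑ i, k i • x i) := by
  simp only [mFourier, ContinuousMap.coe_mk, fourier_apply, AddCircle.toCircle_sum]
  exact (map_prod Circle.coeHom _ _).symm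

lemma mFourier_matrixHom (A : Matrix ι ι ℤ) (k : ι → ℤ) (x : UnitAddTorus ι) :
    mFourier k (matrixHom A x) = mFourier (k ᵥ* A) x := by
  simp only [mFourier_apply_eq_toCircle, matrixHom_apply, vecMul, dotProduct, Finset.smul_sum,
    Finset.sum_smul, mul_smul]
  rw [Finset.sum_comm]

lemma mFourierCoeff_eq_smul_mFourierCoeff_vecMul {E : Type*} [NormedAddCommGroup E]
    [NormedSpace ℂ E] [DecidableEq ι] {A : Matrix ι ι ℤ} (hA : IsUnit A.det)
    {f : UnitAddTorus ι → E} (hf : AEStronglyMeasurable f (haar ι)) {c : ℂ}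
    (h : ∀ᵐ x ∂haar ι, f (matrixHom A x) = c • f x) (k : ι → ℤ) :
    mFourierCoeff f k = c • mFourierCoeff f (k ᵥ* A) := by
  have hT := measurePreserving_matrixHom hA (haar ι)
  calc mFourierCoeff f k = ∫ x, mFourier (-k) x • f x ∂(haar ι).map (matrixHom A) := by
        rw [hT.map_eq]; rfl
    _ = ∫ x, mFourier (-k) (matrixHom A x) • f (matrixHom A x) ∂haar ι := by
        refine integral_map hT.aemeasurable ?_
        rw [hT.map_eq]
        exact (mFourier (-k)).continuous.aestronglyMeasurable.smul hf
    _ = ∫ x, c • (mFourier (-(k ᵥ* A)) x • f x) ∂haar ι := by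
        refine integral_congr_ae ?_
        filter_upwards [h] with x hx
        rw [hx, mFourier_matrixHom, neg_vecMul, smul_comm]
    _ = c • mFourierCoeff f (k ᵥ* A) := integral_smul c _

lemma _root_.MeasureTheory.MemLp.mFourierCoeff_toLp {f : UnitAddTorus ι → ℂ}
    (hf : MemLp f 2 (haar ι)) : mFourierCoeff (hf.toLp f) = mFourierCoeff f :=
  funext fun _ => integral_congr_ae (ae_eq_rfl.smul hf.coeFn_toLp)

lemma summable_sq_mFourierCoeff {f : UnitAddTorus ι → ℂ} (hf : MemLp f 2 (haar ι)) :
    Summable fun k => ‖mFourierCoeff f k‖ ^ 2 := by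
  simpa only [hf.mFourierCoeff_toLp] using (hasSum_sq_mFourierCoeff (hf.toLp f)).summable

lemma ae_eq_zero_of_mFourierCoeff_eq_zero {f : UnitAddTorus ι → ℂ} (hf : MemLp f 2 (haar ι))
    (h : ∀ k, mFourierCoeff f k = 0) : f =ᵐ[haar ι] 0 := by
  have hzero : hf.toLp f = 0 := mFourierBasis.repr.injective <| by
    ext k
    simp [mFourierBasis_repr, hf.mFourierCoeff_toLp, h]
  exact hf.coeFn_toLp.symm.trans (Lp.eq_zero_iff_ae_eq_zero.mp hzero)

end UnitAddTorus

theorem toral_automorphism_eigenfunction_eq_zero_general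
    (n : ℕ) (A : Matrix (Fin n) (Fin n) ℤ)
    (hdet : A.det = 1 ∨ A.det = -1)
    (hev : ∀ z : ℂ, (Matrix.charpoly (A.map (Int.cast : ℤ → ℂ))).IsRoot z →
      ∀ k : ℕ, k ≠ 0 → z ^ k ≠ 1)
    (c : ℂ) (hc : ‖c‖ = 1) (hc1 : c ≠ 1)
    (g : (Fin n → AddCircle (1 : ℝ)) → ℂ)
    (hg : MemLp g 2 volume)
    (heq : ∀ᵐ x ∂volume, g (fun i => ∑ j, A i j • x j) = c * g x) :
    g =ᵐ[volume] 0 := by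
  have hA : IsUnit A.det := Int.isUnit_iff.mpr hdet
  rw [volume_eq_haar] at hg heq ⊢
  have hrec := mFourierCoeff_eq_smul_mFourierCoeff_vecMul hA hg.aestronglyMeasurable heq
  refine ae_eq_zero_of_mFourierCoeff_eq_zero hg fun k => ?_
  rcases eq_or_ne k 0 with rfl | hk
  · have h0 := hrec 0
    rw [zero_vecMul, smul_eq_mul] at h0
    exact eq_zero_of_mul_eq_self_left hc1 h0.symm
  · have hsq := (summable_sq_mFourierCoeff hg).eq_zero_of_injective_of_forall_eq
      (injective_vecMul_pow hA hev hk) fun m => by rw [norm_apply_vecMul_pow_of_eq_smul hc hrec]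
    simpa using hsq

/-- Let `A` be an `n × n` integer matrix (`n ≥ 1`) with determinant `±1`
none of whose complex eigenvalues is a root of unity, and let `T` be the induced
automorphism of the torus `ℝⁿ/ℤⁿ` (preserving the Haar probability measure `volume`).
If `c ∈ ℂ` has `|c| = 1`, `c ≠ 1`, and `g ∈ L²` satisfies `g (T x) = c * g x` for a.e. `x`,
then `g = 0` almost everywhere. -/
theorem toral_automorphism_eigenfunction_eq_zero
    (n : ℕ) (hn : 1 ≤ n) (A : Matrix (Fin n) (Fin n) ℤ)
    (hdet : A.det = 1 ∨ A.det = -1)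
    (hev : ∀ z : ℂ, (Matrix.charpoly (A.map (Int.cast : ℤ → ℂ))).IsRoot z →
      ∀ k : ℕ, k ≠ 0 → z ^ k ≠ 1)
    (c : ℂ) (hc : ‖c‖ = 1) (hc1 : c ≠ 1)
    (g : (Fin n → AddCircle (1 : ℝ)) → ℂ)
    (hg : MemLp g 2 volume)
    (heq : ∀ᵐ x ∂volume, g (fun i => ∑ j, A i j • x j) = c * g x) :
    g =ᵐ[volume] 0 :=
  toral_automorphism_eigenfunction_eq_zero_general n A hdet hev c hc hc1 g hg heq
end
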